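/- (Core of Proposition 2: no simultaneous annihilator.) Suppose β̂ > β > 0, c_P > 0, c_V > 0, and let z = (x_C, x_S, x_R) ∈ ℝ³ satisfy x_S > 0, x_R ≥ 0 and 0 < 1 − x_S − x_R. Then there is no vector λ = (λ_C, λ_S, λ_R) ∈ ℝ³ with λ_C = 1 such that ⟨λ, g_P(z)⟩ = 0, ⟨λ, g_V(z)⟩ = 0, and ⟨λ, [g_P, g_V](z)⟩ = 0 simultaneously, where ⟨·,·⟩ is the standard inner product on ℝ³. -/

import Mathlib

noncomputable section

/-- Drift vector field of the Mayer-form SIRI dynamics, `z = (x_C, x_S, x_R)`. -/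
def fVec (cP cI γ : ℝ) (z : ℝ × ℝ × ℝ) : ℝ × ℝ × ℝ :=
  (cP * (z.2.1 + z.2.2) + cI * (1 - z.2.1 - z.2.2), 0, γ * (1 - z.2.1 - z.2.2))

/-- Control vector field for the protection input. -/
def gPVec (β βh cP : ℝ) (z : ℝ × ℝ × ℝ) : ℝ × ℝ × ℝ :=
  (-(cP * (z.2.1 + z.2.2)), -(β * z.2.1 * (1 - z.2.1 - z.2.2)),
    -(βh * z.2.2 * (1 - z.2.1 - z.2.2)))

/-- Control vector field for the vaccination input. -/
def gVVec (cV : ℝ) (z : ℝ × ℝ × ℝ) : ℝ × ℝ × ℝ := (cV * z.2.1, -z.2.1, z.2.1)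

/-- Lie bracket of two vector fields on `ℝ³`:
`[X, Y](z) = DY(z) X(z) − DX(z) Y(z)`, where `D` is the Fréchet derivative. -/
def lieBr (X Y : ℝ × ℝ × ℝ → ℝ × ℝ × ℝ) (z : ℝ × ℝ × ℝ) : ℝ × ℝ × ℝ :=
  fderiv ℝ Y z (X z) - fderiv ℝ X z (Y z)

/-- Standard inner product on `ℝ³ = ℝ × ℝ × ℝ`. -/
def dot3 (a b : ℝ × ℝ × ℝ) : ℝ := a.1 * b.1 + a.2.1 * b.2.1 + a.2.2 * b.2.2

/-! With `λ_C = 1`, `⟨λ, g_V(z)⟩ = 0` forces `λ_S = c_V + λ_R`, and `⟨λ, [g_P, g_V](z)⟩ = 0`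
forces `(β̂ - β) λ_R = β c_V`, so both `λ_S` and `λ_R` are positive. But then every term of
`⟨λ, g_P(z)⟩` is non-positive and its `λ_S`-term is strictly negative. -/

section Derivatives

variable (z v : ℝ × ℝ × ℝ)

private lemma hasFDerivAt_xS :
    HasFDerivAt (fun z : ℝ × ℝ × ℝ => z.2.1)
      ((ContinuousLinearMap.fst ℝ ℝ ℝ).comp (ContinuousLinearMap.snd ℝ ℝ (ℝ × ℝ))) z :=
  hasFDerivAt_snd.fst

private lemma hasFDerivAt_xR :
    HasFDerivAt (fun z : ℝ × ℝ × ℝ => z.2.2)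
      ((ContinuousLinearMap.snd ℝ ℝ ℝ).comp (ContinuousLinearMap.snd ℝ ℝ (ℝ × ℝ))) z :=
  hasFDerivAt_snd.snd

lemma fderiv_gVVec_apply (cV : ℝ) : fderiv ℝ (gVVec cV) z v = gVVec cV v := by
  have hS := hasFDerivAt_xS z
  have H : HasFDerivAt (gVVec cV) _ z := (hS.const_mul cV).prodMk (hS.neg.prodMk hS)
  rw [H.fderiv]
  simp [gVVec]

lemma fderiv_gPVec_apply (β βh cP : ℝ) :
    fderiv ℝ (gPVec β βh cP) z v =
      (-(cP * (v.2.1 + v.2.2)),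
        -(β * v.2.1 * (1 - z.2.1 - z.2.2) - β * z.2.1 * (v.2.1 + v.2.2)),
        -(βh * v.2.2 * (1 - z.2.1 - z.2.2) - βh * z.2.2 * (v.2.1 + v.2.2))) := by
  have hS := hasFDerivAt_xS z
  have hR := hasFDerivAt_xR z
  have hI := ((hasFDerivAt_const (1 : ℝ) z).sub hS).sub hR
  have H : HasFDerivAt (gPVec β βh cP) _ z :=
    ((hS.add hR).const_mul cP).neg.prodMk
      (((hS.const_mul β).mul hI).neg.prodMk ((hR.const_mul βh).mul hI).neg)
  rw [H.fderiv]
  refine Prod.ext ?_ (Prod.ext ?_ ?_) <;> simp <;> ring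

end Derivatives

lemma lieBr_gPVec_gVVec (β βh cP cV : ℝ) (z : ℝ × ℝ × ℝ) :
    lieBr (gPVec β βh cP) (gVVec cV) z =
      (-(β * cV * z.2.1 * (1 - z.2.1 - z.2.2)), 0,
        -((β - βh) * z.2.1 * (1 - z.2.1 - z.2.2))) := by
  simp only [lieBr, fderiv_gVVec_apply, fderiv_gPVec_apply, gPVec, gVVec, Prod.mk_sub_mk]
  refine Prod.ext ?_ (Prod.ext ?_ ?_) <;> simp <;> ring

section Annihilators

variable (l z : ℝ × ℝ × ℝ)

lemma dot3_gVVec (cV : ℝ) :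
    dot3 l (gVVec cV z) = z.2.1 * (cV * l.1 - l.2.1 + l.2.2) := by
  simp only [dot3, gVVec]
  ring

lemma dot3_lieBr_gPVec_gVVec (β βh cP cV : ℝ) :
    dot3 l (lieBr (gPVec β βh cP) (gVVec cV) z) =
      z.2.1 * (1 - z.2.1 - z.2.2) * ((βh - β) * l.2.2 - β * cV * l.1) := by
  rw [lieBr_gPVec_gVVec]
  simp only [dot3]
  ring

variable {l z}

lemma dot3_gPVec_neg {β βh cP : ℝ} (hβ : 0 < β) (hβh : 0 ≤ βh) (hcP : 0 ≤ cP)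
    (hxS : 0 < z.2.1) (hxR : 0 ≤ z.2.2) (hxI : 0 < 1 - z.2.1 - z.2.2)
    (hlC : 0 ≤ l.1) (hlS : 0 < l.2.1) (hlR : 0 ≤ l.2.2) :
    dot3 l (gPVec β βh cP z) < 0 := by
  have hC : 0 ≤ l.1 * (cP * (z.2.1 + z.2.2)) := by positivity
  have hS : 0 < l.2.1 * (β * z.2.1 * (1 - z.2.1 - z.2.2)) := by positivity
  have hR : 0 ≤ l.2.2 * (βh * z.2.2 * (1 - z.2.1 - z.2.2)) := by positivity
  simp only [dot3, gPVec]
  linarith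

end Annihilators

theorem siri_no_simultaneous_annihilator_general
    (β βh cP cV : ℝ)
    (hβ : 0 < β) (hβhβ : β < βh)
    (hcP : 0 < cP) (hcV : 0 < cV)
    (z : ℝ × ℝ × ℝ) (hxS : 0 < z.2.1) (hxR : 0 ≤ z.2.2)
    (hxI : 0 < 1 - z.2.1 - z.2.2) :
    ¬ ∃ l : ℝ × ℝ × ℝ, l.1 = 1 ∧
        dot3 l (gPVec β βh cP z) = 0 ∧
        dot3 l (gVVec cV z) = 0 ∧
        dot3 l (lieBr (gPVec β βh cP) (gVVec cV) z) = 0 := by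
  rintro ⟨l, hlC, hP, hV, hB⟩
  rw [dot3_lieBr_gPVec_gVVec, hlC] at hB
  rw [dot3_gVVec, hlC] at hV
  have hlR : (βh - β) * l.2.2 = β * cV := by
    linarith [(mul_eq_zero.mp hB).resolve_left (by positivity)]
  have hlR_pos : 0 < l.2.2 :=
    pos_of_mul_pos_right (hlR ▸ mul_pos hβ hcV) (sub_nonneg.mpr hβhβ.le)
  have hlS_pos : 0 < l.2.1 := by linarith [(mul_eq_zero.mp hV).resolve_left hxS.ne']
  exact (dot3_gPVec_neg hβ (by linarith) hcP.le hxS hxR hxI (hlC ▸ zero_le_one) hlS_pos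
    hlR_pos.le).ne hP

/-- core of Proposition 2: no co-state vector with unit cost
component can simultaneously annihilate `g_P(z)`, `g_V(z)` and `[g_P, g_V](z)`. -/
theorem siri_no_simultaneous_annihilator
    (β βh γ cP cV cI : ℝ)
    (hβ : 0 < β) (hβhβ : β < βh) (hγ : 0 < γ)
    (hcP : 0 < cP) (hcV : 0 < cV) (hcI : 0 < cI)
    (z : ℝ × ℝ × ℝ) (hxS : 0 < z.2.1) (hxR : 0 ≤ z.2.2)
    (hxI : 0 < 1 - z.2.1 - z.2.2) :
    ¬ ∃ l : ℝ × ℝ × ℝ, l.1 = 1 ∧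
        dot3 l (gPVec β βh cP z) = 0 ∧
        dot3 l (gVVec cV z) = 0 ∧
        dot3 l (lieBr (gPVec β βh cP) (gVVec cV) z) = 0 :=
  siri_no_simultaneous_annihilator_general β βh cP cV hβ hβhβ hcP hcV z hxS hxR hxI
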